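/- Let p > 1 and let U ⊆ ℂ^{n_A} ⊗ ℂ^{n_B} be a nonzero subspace. Then H_{min,p}(U) ≥ (1/(1−p)) · log₂(E(U)^p + (1 − E(U))^p), where E(U) is the geometric measure of entanglement of U. -/

import Mathlib

/-
Common definitions.

We model the tensor product `ℂ^{n₁} ⊗ ⋯ ⊗ ℂ^{n_m}` concretely as
`EuclideanSpace ℂ (∀ i, Fin (n i))` (coordinates with respect to the standard
product basis), and the `d`-fold tensor power `(ℂ^a)^{⊗ d}` as
`EuclideanSpace ℂ (ι → Fin a)` for an index type `ι` of cardinality `d`.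
-/

noncomputable section

open Finset

/-- The product (elementary tensor) vector `φ₁ ⊗ ⋯ ⊗ φ_m` in a multipartite space,
in coordinates. -/
def prodVec {m : ℕ} {n : Fin m → ℕ} (φ : ∀ i, EuclideanSpace ℂ (Fin (n i))) :
    EuclideanSpace ℂ (∀ i, Fin (n i)) :=
  WithLp.toLp 2 fun v => ∏ i, φ i (v i)

/-- The product vector `φ₁ ⊗ ⋯ ⊗ φ_m` in `(ℂ^n)^{⊗ m}`, in coordinates. -/
def prodVecC {m n : ℕ} (φ : Fin m → EuclideanSpace ℂ (Fin n)) :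
    EuclideanSpace ℂ (Fin m → Fin n) :=
  WithLp.toLp 2 fun v => ∏ i, φ i (v i)

/-- The product vector `φ₁ ⊗ φ₂` in a bipartite space, in coordinates. -/
def prodVec2 {ι₁ ι₂ : Type*} (φ₁ : EuclideanSpace ℂ ι₁) (φ₂ : EuclideanSpace ℂ ι₂) :
    EuclideanSpace ℂ (ι₁ × ι₂) :=
  WithLp.toLp 2 fun p => φ₁ p.1 * φ₂ p.2

/-- Geometric measure of entanglement of a subspace of a multipartite space:
`E(U) = inf { 1 - ⟨φ₁⊗⋯⊗φ_m, Π_U (φ₁⊗⋯⊗φ_m)⟩ : ‖φ_i‖ = 1 }`, where we use that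
`⟨x, Π_U x⟩ = ‖Π_U x‖²`. -/
def gme {m : ℕ} {n : Fin m → ℕ} (U : Submodule ℂ (EuclideanSpace ℂ (∀ i, Fin (n i)))) : ℝ :=
  sInf {x | ∃ φ : ∀ i, EuclideanSpace ℂ (Fin (n i)),
    (∀ i, ‖φ i‖ = 1) ∧ x = 1 - ‖U.orthogonalProjection (prodVec φ)‖ ^ 2}

/-- Geometric measure of entanglement of a subspace of `(ℂ^n)^{⊗ m}`. -/
def gmeC {m n : ℕ} (U : Submodule ℂ (EuclideanSpace ℂ (Fin m → Fin n))) : ℝ :=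
  sInf {x | ∃ φ : Fin m → EuclideanSpace ℂ (Fin n),
    (∀ i, ‖φ i‖ = 1) ∧ x = 1 - ‖U.orthogonalProjection (prodVecC φ)‖ ^ 2}

/-- Geometric measure of entanglement of a subspace of a bipartite space. -/
def gme2 {ι₁ ι₂ : Type*} [Fintype ι₁] [Fintype ι₂]
    (U : Submodule ℂ (EuclideanSpace ℂ (ι₁ × ι₂))) : ℝ :=
  sInf {x | ∃ (φ₁ : EuclideanSpace ℂ ι₁) (φ₂ : EuclideanSpace ℂ ι₂),
    ‖φ₁‖ = 1 ∧ ‖φ₂‖ = 1 ∧ x = 1 - ‖U.orthogonalProjection (prodVec2 φ₁ φ₂)‖ ^ 2}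

/-- The symmetric subspace `S^{|ι|}(ℂ^a)` of `(ℂ^a)^{⊗ ι}`: tensors invariant under all
permutations of the tensor factors. -/
def symmSub (a : ℕ) (ι : Type*) : Submodule ℂ (EuclideanSpace ℂ (ι → Fin a)) where
  carrier := {ψ | ∀ σ : Equiv.Perm ι, ∀ v : ι → Fin a, ψ (v ∘ σ) = ψ v}
  zero_mem' := fun _ _ => rfl
  add_mem' := by
    intro x y hx hy σ v
    show x (v ∘ σ) + y (v ∘ σ) = x v + y v
    rw [hx σ v, hy σ v]
  smul_mem' := by
    intro c x hx σ v
    show c * x (v ∘ σ) = c * x v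
    rw [hx σ v]

/-- Splitting an index `v : Fin d ⊕ Fin d → Fin a` into a pair of indices, realizing
`(ℂ^a)^{⊗ 2d} ≅ (ℂ^a)^{⊗ d} ⊗ (ℂ^a)^{⊗ d}`. -/
def pairSplit {a d : ℕ} (v : (Fin d ⊕ Fin d) → Fin a) : (Fin d → Fin a) × (Fin d → Fin a) :=
  (v ∘ Sum.inl, v ∘ Sum.inr)

/-- The symmetric subspace `S^{2d}(ℂ^a)`, viewed inside
`(ℂ^a)^{⊗ d} ⊗ (ℂ^a)^{⊗ d} = EuclideanSpace ℂ ((Fin d → Fin a) × (Fin d → Fin a))`. -/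
def symmSub2 (a d : ℕ) :
    Submodule ℂ (EuclideanSpace ℂ ((Fin d → Fin a) × (Fin d → Fin a))) where
  carrier := {ψ | ∀ σ : Equiv.Perm (Fin d ⊕ Fin d), ∀ v : (Fin d ⊕ Fin d) → Fin a,
    ψ (pairSplit (v ∘ σ)) = ψ (pairSplit v)}
  zero_mem' := fun _ _ => rfl
  add_mem' := by
    intro x y hx hy σ v
    show x (pairSplit (v ∘ σ)) + y (pairSplit (v ∘ σ)) = x (pairSplit v) + y (pairSplit v)
    rw [hx σ v, hy σ v]
  smul_mem' := by
    intro c x hx σ v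
    show c * x (pairSplit (v ∘ σ)) = c * x (pairSplit v)
    rw [hx σ v]

/-- The tensor product `W₁ ⊗ W₂` of subspaces, as the span of the elementary tensors,
inside the concrete bipartite space. -/
def tensorPairs {ι₁ ι₂ : Type*} [Fintype ι₁] [Fintype ι₂]
    (W₁ : Submodule ℂ (EuclideanSpace ℂ ι₁)) (W₂ : Submodule ℂ (EuclideanSpace ℂ ι₂)) :
    Submodule ℂ (EuclideanSpace ℂ (ι₁ × ι₂)) :=
  Submodule.span ℂ {χ | ∃ ψ ∈ W₁, ∃ φ ∈ W₂, χ = prodVec2 ψ φ}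

/-- The tensor product `U ⊗ V` of two bipartite subspaces
`U, V ⊆ ℂ^{ι₁} ⊗ ℂ^{ι₂}`, viewed as a bipartite subspace of
`(ℂ^{ι₁} ⊗ ℂ^{ι₁}) ⊗ (ℂ^{ι₂} ⊗ ℂ^{ι₂})` via the regrouping isomorphism that swaps
the middle two tensor factors. -/
def tensorSub {ι₁ ι₂ : Type*} [Fintype ι₁] [Fintype ι₂]
    (U V : Submodule ℂ (EuclideanSpace ℂ (ι₁ × ι₂))) :
    Submodule ℂ (EuclideanSpace ℂ ((ι₁ × ι₁) × (ι₂ × ι₂))) :=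
  Submodule.span ℂ {χ | ∃ ψ ∈ U, ∃ φ ∈ V,
    χ = WithLp.toLp 2 fun p => ψ (p.1.1, p.2.1) * φ (p.1.2, p.2.2)}

/-- Entrywise complex conjugate of a vector, with respect to the standard basis. -/
def conjVec {ι : Type*} (ψ : EuclideanSpace ℂ ι) : EuclideanSpace ℂ ι :=
  WithLp.toLp 2 fun v => starRingEnd ℂ (ψ v)

/-- The subspace `Ū` of entrywise complex conjugates of vectors of `U`. -/
def conjSubmodule {ι : Type*} (U : Submodule ℂ (EuclideanSpace ℂ ι)) :
    Submodule ℂ (EuclideanSpace ℂ ι) where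
  carrier := conjVec '' U
  zero_mem' := ⟨0, U.zero_mem, by
    ext v; simp [conjVec]⟩
  add_mem' := by
    rintro a b ⟨x, hx, rfl⟩ ⟨y, hy, rfl⟩
    exact ⟨x + y, U.add_mem hx hy, by
      ext v; simp [conjVec]⟩
  smul_mem' := by
    rintro c a ⟨x, hx, rfl⟩
    refine ⟨starRingEnd ℂ c • x, U.smul_mem _ hx, ?_⟩
    ext v
    simp [conjVec]

/-- The content (type) of a word `w : Fin d → Fin a`: the vector `α ∈ ℤ_{≥0}^a`
recording how many times each letter occurs. -/
def wordContent {a d : ℕ} (w : Fin d → Fin a) : Fin a → ℕ :=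
  fun i => (Finset.univ.filter fun j => w j = i).card

/-- The monomial orthonormal basis vector `|α⟩ = C(d,α)^{1/2} Π_{S^d(ℂ^a)} (e₁^{⊗α₁} ⊗ ⋯ ⊗ e_a^{⊗α_a})`
of the symmetric subspace `S^d(ℂ^a)`, where `α = wordContent w` and
`e₁^{⊗α₁} ⊗ ⋯ ⊗ e_a^{⊗α_a}` is the standard basis vector of `(ℂ^a)^{⊗ d}` indexed by any word `w`
of content `α` (the projection does not depend on the choice of such a word). -/
def monVec (a d : ℕ) (w : Fin d → Fin a) : EuclideanSpace ℂ (Fin d → Fin a) :=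
  (Real.sqrt (Nat.multinomial Finset.univ (wordContent w)) : ℂ) •
    ((symmSub a (Fin d)).orthogonalProjection (EuclideanSpace.single w 1) :
      EuclideanSpace ℂ (Fin d → Fin a))

/-- The squared Schmidt coefficients of a bipartite vector `ψ`, i.e. the eigenvalues of
`M Mᴴ` where `M` is the coefficient matrix of `ψ`. -/
def schmidtSqCoeffs {ι₁ ι₂ : Type*} [Fintype ι₁] [Fintype ι₂] [DecidableEq ι₁]
    (ψ : EuclideanSpace ℂ (ι₁ × ι₂)) : ι₁ → ℝ :=
  (Matrix.isHermitian_mul_conjTranspose_self (Matrix.of fun i j => ψ (i, j))).eigenvalues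

/-- The Rényi `p`-entropy of (the squared Schmidt coefficients of) a bipartite vector. -/
def renyiEnt (p : ℝ) {ι₁ ι₂ : Type*} [Fintype ι₁] [Fintype ι₂] [DecidableEq ι₁]
    (ψ : EuclideanSpace ℂ (ι₁ × ι₂)) : ℝ :=
  (1 / (1 - p)) * Real.logb 2 (∑ i, schmidtSqCoeffs ψ i ^ p)

/-- The minimum output Rényi `p`-entropy of a bipartite subspace. -/
def hminEnt (p : ℝ) {ι₁ ι₂ : Type*} [Fintype ι₁] [Fintype ι₂] [DecidableEq ι₁]
    (U : Submodule ℂ (EuclideanSpace ℂ (ι₁ × ι₂))) : ℝ :=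
  sInf {x | ∃ ψ ∈ U, ‖ψ‖ = 1 ∧ x = renyiEnt p ψ}

end

/-!
Let `ψ ∈ U` be a unit vector with coefficient matrix `M`, and `u` a unit eigenvector of `M Mᴴ`
for an eigenvalue `λᵢ > 0`. Then `φ₂ ∝ conj (Mᴴ u)` is a unit vector with `⟪u ⊗ φ₂, ψ⟫ = √λᵢ`,
so `λᵢ ≤ ‖Π_U (u ⊗ φ₂)‖² ≤ 1 - E(U)`.

A probability vector whose entries are at most `1 - E` has `∑ λᵢ^p ≤ E^p + (1 - E)^p`: if some
entry `t` is at least `1/2`, lump the others together (`∑_{j ≠ i} λⱼ^p ≤ (1 - t)^p`) and compare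
`(t, 1 - t)` with `(1 - E, E)` by convexity of `x ↦ x^p`; otherwise `∑ λᵢ^p ≤ 2^{1-p}`, the
minimum of `x^p + (1 - x)^p`. Since `1 / (1 - p) < 0`, taking `log₂` reverses the inequality.
-/

open Finset Matrix

theorem ConvexOn.map_add_map_le_of_add_eq {s : Set ℝ} {f : ℝ → ℝ} (hf : ConvexOn ℝ s f)
    {a b c d : ℝ} (ha : a ∈ s) (hd : d ∈ s) (hdb : d ≤ b) (hba : b ≤ a) (h : b + c = a + d) :
    f b + f c ≤ f a + f d := by
  rcases hdb.eq_or_lt with rfl | hdb'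
  · obtain rfl : c = a := by linarith
    rw [add_comm]
  have had : 0 < a - d := by linarith
  -- `b` and `c` are the convex combinations `θ a + (1 - θ) d` and `(1 - θ) a + θ d`
  set θ := (b - d) / (a - d)
  have hθ : θ * (a - d) = b - d := div_mul_cancel₀ _ had.ne'
  have hθ₀ : 0 ≤ θ := div_nonneg (by linarith) had.le
  have hθ₁ : θ ≤ 1 := (div_le_one had).2 (by linarith)
  have hb := hf.2 ha hd hθ₀ (sub_nonneg.2 hθ₁) (add_sub_cancel θ 1)
  have hc := hf.2 ha hd (sub_nonneg.2 hθ₁) hθ₀ (sub_add_cancel 1 θ)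
  simp only [smul_eq_mul] at hb hc
  rw [show θ * a + (1 - θ) * d = b by linarith] at hb
  rw [show (1 - θ) * a + θ * d = c by linarith] at hc
  linarith

theorem Finset.sum_rpow_le_rpow_sub_one_mul_sum {ι : Type*} {s : Finset ι} {x : ι → ℝ}
    {t p : ℝ} (hp : 1 ≤ p) (hx : ∀ i ∈ s, 0 ≤ x i) (hxt : ∀ i ∈ s, x i ≤ t) :
    ∑ i ∈ s, x i ^ p ≤ t ^ (p - 1) * ∑ i ∈ s, x i := by
  rw [mul_sum]
  refine sum_le_sum fun i hi => ?_
  calc x i ^ p = x i ^ (p - 1) * x i := by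
        rw [← Real.rpow_add_one' (hx i hi) (by linarith), sub_add_cancel]
    _ ≤ t ^ (p - 1) * x i :=
        mul_le_mul_of_nonneg_right (Real.rpow_le_rpow (hx i hi) (hxt i hi) (by linarith)) (hx i hi)

theorem Finset.sum_rpow_le_rpow_sum {ι : Type*} {s : Finset ι} {x : ι → ℝ} {p : ℝ}
    (hp : 1 ≤ p) (hx : ∀ i ∈ s, 0 ≤ x i) : ∑ i ∈ s, x i ^ p ≤ (∑ i ∈ s, x i) ^ p := by
  refine (sum_rpow_le_rpow_sub_one_mul_sum hp hx fun i hi => single_le_sum hx hi).trans_eq ?_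
  rw [← Real.rpow_add_one' (sum_nonneg hx) (by linarith), sub_add_cancel]

theorem sum_rpow_le_rpow_add_one_sub_rpow {ι : Type*} [Fintype ι] {x : ι → ℝ} {E p : ℝ}
    (hp : 1 ≤ p) (hE : 0 ≤ E) (hx : ∀ i, 0 ≤ x i) (hxE : ∀ i, x i ≤ 1 - E)
    (hsum : ∑ i, x i = 1) : ∑ i, x i ^ p ≤ E ^ p + (1 - E) ^ p := by
  classical
  have hconv := convexOn_rpow hp
  have hE₁ : E ≤ 1 := by
    obtain ⟨j, -, -⟩ := exists_ne_zero_of_sum_ne_zero (hsum ▸ one_ne_zero)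
    linarith [hx j, hxE j]
  by_cases hlarge : ∃ i, 1 / 2 ≤ x i
  · obtain ⟨i, hi⟩ := hlarge
    have hrest : ∑ j ∈ univ.erase i, x j = 1 - x i := by
      rw [← hsum, ← add_sum_erase univ x (mem_univ i), add_sub_cancel_left]
    have hrest_rpow := sum_rpow_le_rpow_sum hp (s := univ.erase i) fun j _ => hx j
    rw [hrest] at hrest_rpow
    rw [← add_sum_erase univ _ (mem_univ i), add_comm (E ^ p)]
    have hpair := hconv.map_add_map_le_of_add_eq (a := 1 - E) (b := x i) (c := 1 - x i) (d := E)
      (Set.mem_Ici.2 (by linarith)) (Set.mem_Ici.2 hE) (by linarith [hxE i]) (hxE i) (by ring)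
    linarith
  · push Not at hlarge
    calc ∑ i, x i ^ p ≤ (1 / 2) ^ (p - 1) * ∑ i, x i :=
          sum_rpow_le_rpow_sub_one_mul_sum hp (fun i _ => hx i) fun i _ => (hlarge i).le
      _ = (1 / 2) ^ p + (1 / 2) ^ p := by
          rw [hsum, Real.rpow_sub_one (by norm_num)]; ring
      _ ≤ E ^ p + (1 - E) ^ p := by
          have := hconv.2 (Set.mem_Ici.2 hE) (Set.mem_Ici.2 (sub_nonneg.2 hE₁))
            (by norm_num : (0 : ℝ) ≤ 1 / 2) (by norm_num : (0 : ℝ) ≤ 1 / 2) (by norm_num)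
          simp only [smul_eq_mul] at this
          rw [show 1 / 2 * E + 1 / 2 * (1 - E) = 1 / 2 by ring] at this
          linarith

theorem Submodule.norm_inner_le_norm_orthogonalProjectionOnto_mul {𝕜 E : Type*} [RCLike 𝕜]
    [NormedAddCommGroup E] [InnerProductSpace 𝕜 E] (U : Submodule 𝕜 E)
    [U.HasOrthogonalProjection] {ψ : E} (hψ : ψ ∈ U) (x : E) :
    ‖inner 𝕜 x ψ‖ ≤ ‖U.orthogonalProjectionOnto x‖ * ‖ψ‖ := by
  rw [← U.inner_orthogonalProjectionOnto_eq_of_mem_right ⟨ψ, hψ⟩]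
  exact norm_inner_le_norm _ _

section ConjVec

variable {ι : Type*}

theorem conjVec_conjVec (ψ : EuclideanSpace ℂ ι) : conjVec (conjVec ψ) = ψ := by
  ext; simp [conjVec]

theorem norm_conjVec [Fintype ι] (ψ : EuclideanSpace ℂ ι) : ‖conjVec ψ‖ = ‖ψ‖ := by
  simp [EuclideanSpace.norm_eq, conjVec]

end ConjVec

section Bipartite

variable {ι₁ ι₂ : Type*} [Fintype ι₁] [Fintype ι₂]

theorem norm_prodVec2 (φ₁ : EuclideanSpace ℂ ι₁) (φ₂ : EuclideanSpace ℂ ι₂) :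
    ‖prodVec2 φ₁ φ₂‖ = ‖φ₁‖ * ‖φ₂‖ := by
  simp only [EuclideanSpace.norm_eq, ← Real.sqrt_mul (sum_nonneg fun _ _ => sq_nonneg _),
    sum_mul_sum, ← Fintype.sum_prod_type', prodVec2, norm_mul, mul_pow]

theorem sq_norm_orthogonalProjectionOnto_prodVec2_le_one
    (U : Submodule ℂ (EuclideanSpace ℂ (ι₁ × ι₂))) {φ₁ : EuclideanSpace ℂ ι₁}
    {φ₂ : EuclideanSpace ℂ ι₂} (hφ₁ : ‖φ₁‖ = 1) (hφ₂ : ‖φ₂‖ = 1) :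
    ‖U.orthogonalProjectionOnto (prodVec2 φ₁ φ₂)‖ ^ 2 ≤ 1 := by
  have := U.norm_orthogonalProjectionOnto_apply_le (prodVec2 φ₁ φ₂)
  rw [norm_prodVec2, hφ₁, hφ₂, mul_one] at this
  exact pow_le_one₀ (norm_nonneg _) this

theorem gme2_nonneg (U : Submodule ℂ (EuclideanSpace ℂ (ι₁ × ι₂))) : 0 ≤ gme2 U :=
  Real.sInf_nonneg <| by
    rintro _ ⟨φ₁, φ₂, hφ₁, hφ₂, rfl⟩
    exact sub_nonneg.2 (sq_norm_orthogonalProjectionOnto_prodVec2_le_one U hφ₁ hφ₂)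

theorem gme2_le (U : Submodule ℂ (EuclideanSpace ℂ (ι₁ × ι₂))) {φ₁ : EuclideanSpace ℂ ι₁}
    {φ₂ : EuclideanSpace ℂ ι₂} (hφ₁ : ‖φ₁‖ = 1) (hφ₂ : ‖φ₂‖ = 1) :
    gme2 U ≤ 1 - ‖U.orthogonalProjectionOnto (prodVec2 φ₁ φ₂)‖ ^ 2 := by
  refine csInf_le ⟨0, ?_⟩ ⟨φ₁, φ₂, hφ₁, hφ₂, rfl⟩
  rintro _ ⟨φ₁, φ₂, hφ₁, hφ₂, rfl⟩
  exact sub_nonneg.2 (sq_norm_orthogonalProjectionOnto_prodVec2_le_one U hφ₁ hφ₂)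

theorem gme2_le_one [Nonempty ι₁] [Nonempty ι₂] (U : Submodule ℂ (EuclideanSpace ℂ (ι₁ × ι₂))) :
    gme2 U ≤ 1 := by
  classical
  have hφ₁ : ‖EuclideanSpace.single (Classical.arbitrary ι₁) (1 : ℂ)‖ = 1 := by simp
  have hφ₂ : ‖EuclideanSpace.single (Classical.arbitrary ι₂) (1 : ℂ)‖ = 1 := by simp
  exact (gme2_le U hφ₁ hφ₂).trans (sub_le_self _ (sq_nonneg _))

def coeffMatrix (ψ : EuclideanSpace ℂ (ι₁ × ι₂)) : Matrix ι₁ ι₂ ℂ :=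
  Matrix.of fun i j => ψ (i, j)

theorem inner_prodVec2 [DecidableEq ι₂] (φ₁ : EuclideanSpace ℂ ι₁) (φ₂ : EuclideanSpace ℂ ι₂)
    (ψ : EuclideanSpace ℂ (ι₁ × ι₂)) :
    inner ℂ (prodVec2 φ₁ φ₂) ψ = inner ℂ φ₁ ((coeffMatrix ψ).toEuclideanLin (conjVec φ₂)) := by
  simp only [EuclideanSpace.inner_eq_star_dotProduct, Matrix.toLpLin_apply, dotProduct,
    mulVec, Fintype.sum_prod_type, coeffMatrix, of_apply, prodVec2, conjVec, Pi.star_apply,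
    RCLike.star_def, map_mul, sum_mul]
  exact sum_congr rfl fun a _ => sum_congr rfl fun b _ => by ring

variable [DecidableEq ι₁]

theorem schmidtSqCoeffs_nonneg (ψ : EuclideanSpace ℂ (ι₁ × ι₂)) (i : ι₁) :
    0 ≤ schmidtSqCoeffs ψ i :=
  eigenvalues_self_mul_conjTranspose_nonneg _ i

theorem sum_schmidtSqCoeffs (ψ : EuclideanSpace ℂ (ι₁ × ι₂)) :
    ∑ i, schmidtSqCoeffs ψ i = ‖ψ‖ ^ 2 := by
  have htrace := (isHermitian_mul_conjTranspose_self (coeffMatrix ψ)).trace_eq_sum_eigenvalues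
  apply RCLike.ofReal_injective (K := ℂ)
  rw [RCLike.ofReal_sum]
  refine htrace.symm.trans ?_
  rw [EuclideanSpace.norm_sq_eq, trace, Fintype.sum_prod_type]
  simp [mul_apply, coeffMatrix, Complex.mul_conj, Complex.normSq_eq_norm_sq]

variable [DecidableEq ι₂]

theorem exists_inner_prodVec2_eq_sqrt_schmidtSqCoeffs (ψ : EuclideanSpace ℂ (ι₁ × ι₂)) (i : ι₁)
    (hi : 0 < schmidtSqCoeffs ψ i) :
    ∃ (φ₁ : EuclideanSpace ℂ ι₁) (φ₂ : EuclideanSpace ℂ ι₂), ‖φ₁‖ = 1 ∧ ‖φ₂‖ = 1 ∧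
      inner ℂ (prodVec2 φ₁ φ₂) ψ = √(schmidtSqCoeffs ψ i) := by
  set T := (coeffMatrix ψ).toEuclideanLin
  set hA := isHermitian_mul_conjTranspose_self (coeffMatrix ψ)
  set u := hA.eigenvectorBasis i
  set l := schmidtSqCoeffs ψ i
  have hu : ‖u‖ = 1 := hA.eigenvectorBasis.orthonormal.1 i
  have hTT : T (T.adjoint u) = (l : ℂ) • u := by
    rw [← toEuclideanLin_conjTranspose_eq_adjoint]
    simp only [T, toLpLin_apply, mulVec_mulVec, u, hA.mulVec_eigenvectorBasis]
    rfl
  have hnorm : ‖T.adjoint u‖ = √l := by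
    have : ‖T.adjoint u‖ ^ 2 = l := by
      rw [@norm_sq_eq_re_inner ℂ, LinearMap.adjoint_inner_left, hTT, inner_smul_right,
        inner_self_eq_norm_sq_to_K, hu]
      simp
    rw [← this, Real.sqrt_sq (norm_nonneg _)]
  refine ⟨u, conjVec (((√l : ℝ) : ℂ)⁻¹ • T.adjoint u), hu, ?_, ?_⟩
  · rw [norm_conjVec, norm_smul, hnorm, norm_inv, Complex.norm_real,
      Real.norm_of_nonneg (Real.sqrt_nonneg _), inv_mul_cancel₀ (Real.sqrt_pos.2 hi).ne']
  · rw [inner_prodVec2, conjVec_conjVec, map_smul, hTT, inner_smul_right, inner_smul_right,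
      inner_self_eq_norm_sq_to_K, hu, RCLike.ofReal_one, one_pow, mul_one,
      inv_mul_eq_iff_eq_mul₀ (Complex.ofReal_ne_zero.2 (Real.sqrt_pos.2 hi).ne')]
    exact_mod_cast (Real.mul_self_sqrt hi.le).symm

theorem schmidtSqCoeffs_le_one_sub_gme2 {U : Submodule ℂ (EuclideanSpace ℂ (ι₁ × ι₂))}
    {ψ : EuclideanSpace ℂ (ι₁ × ι₂)} (hψU : ψ ∈ U) (hψ : ‖ψ‖ = 1) (i : ι₁) :
    schmidtSqCoeffs ψ i ≤ 1 - gme2 U := by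
  rcases (schmidtSqCoeffs_nonneg ψ i).eq_or_lt with hi | hi
  · have : Nonempty ι₁ := ⟨i⟩
    have : Nonempty ι₂ := by
      by_contra h
      rw [not_nonempty_iff] at h
      rw [Subsingleton.elim ψ 0, norm_zero] at hψ
      exact zero_ne_one hψ
    rw [← hi, sub_nonneg]
    exact gme2_le_one U
  · obtain ⟨φ₁, φ₂, hφ₁, hφ₂, hinner⟩ := exists_inner_prodVec2_eq_sqrt_schmidtSqCoeffs ψ i hi
    have hproj := U.norm_inner_le_norm_orthogonalProjectionOnto_mul hψU (prodVec2 φ₁ φ₂)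
    rw [hinner, hψ, mul_one, Complex.norm_real, Real.norm_of_nonneg (Real.sqrt_nonneg _)] at hproj
    calc schmidtSqCoeffs ψ i = √(schmidtSqCoeffs ψ i) ^ 2 := (Real.sq_sqrt hi.le).symm
      _ ≤ ‖U.orthogonalProjectionOnto (prodVec2 φ₁ φ₂)‖ ^ 2 := by gcongr
      _ ≤ 1 - gme2 U := by linarith [gme2_le U hφ₁ hφ₂]

end Bipartite

/-- For a nonzero subspace `U ⊆ ℂ^{n_A} ⊗ ℂ^{n_B}`,
`H_{min,p}(U) ≥ (1/(1−p)) log₂(E(U)^p + (1−E(U))^p)`. -/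
theorem stmt13 (p : ℝ) (hp : 1 < p) (nA nB : ℕ)
    (U : Submodule ℂ (EuclideanSpace ℂ (Fin nA × Fin nB))) (hU : U ≠ ⊥) :
    (1 / (1 - p)) * Real.logb 2 (gme2 U ^ p + (1 - gme2 U) ^ p) ≤ hminEnt p U := by
  obtain ⟨ψ₀, hψ₀U, hψ₀⟩ := Submodule.exists_mem_ne_zero_of_ne_bot hU
  refine le_csInf ⟨_, _, U.smul_mem _ hψ₀U, norm_smul_inv_norm hψ₀, rfl⟩ ?_
  rintro _ ⟨ψ, hψU, hψ, rfl⟩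
  have hsum : ∑ i, schmidtSqCoeffs ψ i = 1 := by rw [sum_schmidtSqCoeffs, hψ, one_pow]
  have hpos : 0 < ∑ i, schmidtSqCoeffs ψ i ^ p := by
    obtain ⟨i, -, hi⟩ := exists_ne_zero_of_sum_ne_zero (hsum ▸ one_ne_zero)
    exact sum_pos' (fun j _ => Real.rpow_nonneg (schmidtSqCoeffs_nonneg ψ j) p)
      ⟨i, mem_univ i, Real.rpow_pos_of_pos ((schmidtSqCoeffs_nonneg ψ i).lt_of_ne' hi) p⟩
  have hmaj := sum_rpow_le_rpow_add_one_sub_rpow hp.le (gme2_nonneg U)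
    (schmidtSqCoeffs_nonneg ψ) (schmidtSqCoeffs_le_one_sub_gme2 hψU hψ) hsum
  exact mul_le_mul_of_nonpos_left (Real.logb_le_logb_of_le one_lt_two hpos hmaj)
    (one_div_nonpos.2 (by linarith))
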